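/- Let A be positive definite and X Hermitian, and suppose Z is the Hermitian solution of the Sylvester equation AZ + ZA = A^{1/2}XA^{1/2}. Then for t near 0, (A² + tA^{1/2}XA^{1/2})^{1/2} = A + tZ + O(t²); consequently the Bures-Wasserstein logarithm satisfies log_A(A + tX) = tX + O(t²), i.e., the derivative at t=0 of t ↦ log_A(A+tX) equals X. -/

import Mathlib

open Matrix Filter Asymptotics
open scoped ComplexOrder

/-- The PSD square root of a matrix (0 if not PSD). -/
noncomputable def msqrt {n : ℕ} (M : Matrix (Fin n) (Fin n) ℂ) : Matrix (Fin n) (Fin n) ℂ :=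
  letI := Classical.propDecidable M.PosSemidef
  if h : M.PosSemidef then
    h.isHermitian.eigenvectorUnitary.1 * diagonal ((↑) ∘ (√·) ∘ h.isHermitian.eigenvalues) *
      (star h.isHermitian.eigenvectorUnitary : Matrix (Fin n) (Fin n) ℂ)
  else 0

/-- `(AB)^{1/2} := A^{1/2} (A^{1/2} B A^{1/2})^{1/2} A^{-1/2}`. -/
noncomputable def sqAB {n : ℕ} (A B : Matrix (Fin n) (Fin n) ℂ) : Matrix (Fin n) (Fin n) ℂ :=
  msqrt A * msqrt (msqrt A * B * msqrt A) * (msqrt A)⁻¹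

/-- Bures-Wasserstein geodesic `A ◇_t B`. -/
noncomputable def geo {n : ℕ} (A B : Matrix (Fin n) (Fin n) ℂ) (t : ℝ) : Matrix (Fin n) (Fin n) ℂ :=
  ((1 - t)^2 : ℝ) • A + (t^2 : ℝ) • B + (t * (1 - t) : ℝ) • (sqAB A B + (sqAB A B)ᴴ)

/-- Bures-Wasserstein distance. -/
noncomputable def dBW {n : ℕ} (A B : Matrix (Fin n) (Fin n) ℂ) : ℝ :=
  Real.sqrt ((Matrix.trace A).re + (Matrix.trace B).re -
    2 * (Matrix.trace (msqrt (msqrt A * B * msqrt A))).re)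

attribute [local instance] Matrix.normedAddCommGroup Matrix.normedSpace

/-!
Write `Y = AZ + ZA`, `P = (A² + tY)^{1/2}`, `S = A + tZ` and `D = P - S`. Then
`P² - S² = -t²Z²` and `P² - S² = PD + DS`, so for an eigenvector `v` of the Hermitian `D` with
eigenvalue `μ`, `⟪v, (P² - S²) v⟫ = μ (⟪v, P v⟫ + ⟪v, S v⟫)`. Since `P ≥ 0` and `S ≥ c > 0`
for small `t`, every eigenvalue of `D` is `O(t²)`, hence so is `‖D‖`.
With `R = A^{1/2}` one has `R (A + tX) R = A² + tY` and `RZR⁻¹ + R⁻¹ZR = X`, so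
`log_A(A + tX) - tX = RDR⁻¹ + R⁻¹DR`, which is linear in `D`.
-/

open Topology
open scoped MatrixOrder

theorem hasDerivAt_of_isBigO_sq {F : Type*} [NormedAddCommGroup F] [NormedSpace ℝ F]
    {f : ℝ → F} {f' : F} (h : (fun t => f t - t • f') =O[𝓝 0] fun t => t ^ 2) :
    HasDerivAt f f' 0 := by
  have h0 : f 0 = 0 := by simpa using h.eq_zero_imp.self_of_nhds (by simp)
  rw [hasDerivAt_iff_isLittleO]
  simpa [h0] using h.trans_isLittleO (isLittleO_pow_id one_lt_two)

theorem IsStrictlyPositive.eventually_algebraMap_le_add_smul {𝒜 : Type*} [CStarAlgebra 𝒜]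
    [PartialOrder 𝒜] [StarOrderedRing 𝒜] {a b : 𝒜} (ha : IsStrictlyPositive a)
    (hb : IsSelfAdjoint b) : ∃ c > 0, ∀ᶠ t in 𝓝 (0 : ℝ), algebraMap ℝ 𝒜 c ≤ a + t • b := by
  cases subsingleton_or_nontrivial 𝒜
  · exact ⟨1, one_pos, .of_forall fun _ => (Subsingleton.elim _ _).le⟩
  obtain ⟨r, hr, hra⟩ :=
    (CFC.exists_pos_algebraMap_le_iff ha.isSelfAdjoint).2 fun x hx => ha.spectrum_pos hx
  have hsmall : ∀ᶠ t in 𝓝 (0 : ℝ), ‖t • b‖ ≤ r / 2 := by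
    have : Tendsto (fun t : ℝ => ‖t • b‖) (𝓝 0) (𝓝 0) := by
      simpa using ((continuous_id.smul continuous_const).norm.tendsto (0 : ℝ) :
        Tendsto (fun t : ℝ => ‖t • b‖) _ _)
    exact this.eventually (eventually_le_nhds (half_pos hr))
  refine ⟨r / 2, half_pos hr, ?_⟩
  filter_upwards [hsmall] with t ht
  calc algebraMap ℝ 𝒜 (r / 2) = algebraMap ℝ 𝒜 r - algebraMap ℝ 𝒜 (r / 2) := by
        rw [← map_sub, sub_half]
    _ ≤ a - algebraMap ℝ 𝒜 ‖t • b‖ := sub_le_sub hra (algebraMap_le_algebraMap.2 ht)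
    _ ≤ a + t • b := by
        rw [sub_eq_add_neg]
        exact add_le_add_right ((IsSelfAdjoint.all t).smul hb).neg_algebraMap_norm_le_self a

namespace ContinuousLinearMap

variable {𝕜 E : Type*} [RCLike 𝕜] [NormedAddCommGroup E] [InnerProductSpace 𝕜 E]
  {P S : E →L[𝕜] E} {c : ℝ}

open Module.End RCLike
open scoped InnerProductSpace ComplexConjugate

theorem isSelfAdjoint_sub_of_smul_one_le [CompleteSpace E] (hP : 0 ≤ P) (hS : (c : 𝕜) • 1 ≤ S) :
    IsSelfAdjoint (P - S) := by
  have hc : IsSelfAdjoint ((c : 𝕜) • (1 : E →L[𝕜] E)) := .smul (conj_ofReal c) (.one _)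
  simpa using ((nonneg_iff_isPositive _).1 hP).isSelfAdjoint.sub
    (((le_def _ _).1 hS).isSelfAdjoint.add hc)

theorem norm_mul_le_of_hasEigenvalue_sub [CompleteSpace E] (hP : 0 ≤ P) (hS : (c : 𝕜) • 1 ≤ S)
    {μ : 𝕜} (hμ : HasEigenvalue ((P - S : E →L[𝕜] E) : Module.End 𝕜 E) μ) :
    ‖μ‖ * c ≤ ‖P * P - S * S‖ := by
  obtain ⟨v, hv⟩ := hμ.exists_hasEigenvector
  have hv0 : 0 < ‖v‖ ^ 2 := by have := hv.2; positivity
  have hTv : (P - S) v = μ • v := hv.apply_eq_smul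
  have hT := (isSelfAdjoint_sub_of_smul_one_le hP hS).isSymmetric
  have hμr : conj μ = μ := hT.conj_eigenvalue_eq_self hμ
  have hinner : ⟪v, (P * P - S * S) v⟫_𝕜 = μ * (⟪v, P v⟫_𝕜 + ⟪v, S v⟫_𝕜) := by
    have hsplit : P * P - S * S = P * (P - S) + (P - S) * S := by noncomm_ring
    have hsym : ⟪v, (P - S) (S v)⟫_𝕜 = ⟪(P - S) v, S v⟫_𝕜 := (hT v (S v)).symm
    rw [hsplit, _root_.add_apply, mul_apply_eq_comp, mul_apply_eq_comp, hTv, inner_add_right,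
      map_smul, inner_smul_right, hsym, hTv, inner_smul_left, hμr, mul_add]
  have hPv : 0 ≤ re ⟪v, P v⟫_𝕜 := ((nonneg_iff_isPositive _).1 hP).re_inner_nonneg_right v
  have hSv : c * ‖v‖ ^ 2 ≤ re ⟪v, S v⟫_𝕜 := by
    have := ((le_def _ _).1 hS).re_inner_nonneg_right v
    rw [_root_.sub_apply, inner_sub_right, map_sub, _root_.smul_apply, one_apply_eq_self,
      inner_smul_right, inner_self_eq_norm_sq_to_K, ← ofReal_pow, ← ofReal_mul, ofReal_re] at this
    linarith
  have hbound : ‖⟪v, (P * P - S * S) v⟫_𝕜‖ ≤ ‖P * P - S * S‖ * ‖v‖ ^ 2 := by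
    calc _ ≤ ‖v‖ * ‖(P * P - S * S) v‖ := norm_inner_le_norm _ _
      _ ≤ ‖v‖ * (‖P * P - S * S‖ * ‖v‖) := by gcongr; exact le_opNorm _ _
      _ = _ := by ring
  refine le_of_mul_le_mul_right ?_ hv0
  calc ‖μ‖ * c * ‖v‖ ^ 2 ≤ ‖μ‖ * re (⟪v, P v⟫_𝕜 + ⟪v, S v⟫_𝕜) := by
        rw [map_add, mul_assoc]; gcongr; linarith
    _ ≤ ‖μ‖ * ‖⟪v, P v⟫_𝕜 + ⟪v, S v⟫_𝕜‖ := by gcongr; exact re_le_norm _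
    _ = ‖⟪v, (P * P - S * S) v⟫_𝕜‖ := by rw [hinner, norm_mul]
    _ ≤ _ := hbound

theorem norm_sub_le_norm_mul_self_sub_div [FiniteDimensional 𝕜 E] (hc : 0 < c) (hP : 0 ≤ P)
    (hS : (c : 𝕜) • 1 ≤ S) : ‖P - S‖ ≤ ‖P * P - S * S‖ / c := by
  have := FiniteDimensional.complete 𝕜 E
  let K : NNReal := ⟨‖P * P - S * S‖ / c, by positivity⟩
  have hK : spectralRadius 𝕜 (P - S) ≤ K := by
    refine iSup₂_le fun μ hμ => ENNReal.coe_le_coe.2 ?_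
    rw [spectrum_eq] at hμ
    rw [← NNReal.coe_le_coe, coe_nnnorm]
    show ‖μ‖ ≤ ‖P * P - S * S‖ / c
    rw [le_div_iff₀ hc]
    exact norm_mul_le_of_hasEigenvalue_sub hP hS (HasEigenvalue.of_mem_spectrum hμ)
  rwa [(P - S).spectralRadius_eq_nnnorm (isSelfAdjoint_sub_of_smul_one_le hP hS),
    ENNReal.coe_le_coe, ← NNReal.coe_le_coe] at hK

end ContinuousLinearMap

namespace Matrix

theorem isBigO_of_isBigO_toEuclideanCLM {α ι 𝕜 F : Type*} [RCLike 𝕜] [Fintype ι]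
    [DecidableEq ι] [NormedAddCommGroup F] {f : α → Matrix ι ι 𝕜} {g : α → F} {l : Filter α}
    (h : (fun x => toEuclideanCLM (n := ι) (𝕜 := 𝕜) (f x)) =O[l] g) : f =O[l] g := by
  let e := (toEuclideanCLM (n := ι) (𝕜 := 𝕜)).toAlgEquiv.toLinearEquiv.toContinuousLinearEquiv
  exact ((e.symm.toContinuousLinearMap.isBigO_comp (fun x => e (f x)) l).trans h).congr_left
    fun x => e.symm_apply_apply (f x)

theorem toEuclideanCLM_real_smul {ι : Type*} [Fintype ι] [DecidableEq ι] (t : ℝ)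
    (M : Matrix ι ι ℂ) :
    toEuclideanCLM (n := ι) (𝕜 := ℂ) (t • M) = t • toEuclideanCLM (n := ι) (𝕜 := ℂ) M :=
  (toEuclideanCLM (n := ι) (𝕜 := ℂ)).toAlgEquiv.toLinearEquiv.toLinearMap.map_smul_of_tower t M

theorem PosDef.isStrictlyPositive_toEuclideanCLM {ι : Type*} [Fintype ι] [DecidableEq ι]
    {A : Matrix ι ι ℂ} (hA : A.PosDef) : IsStrictlyPositive (toEuclideanCLM (n := ι) (𝕜 := ℂ) A) :=
  have hA' := isStrictlyPositive_iff_posDef.2 hA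
  IsStrictlyPositive.iff_of_unital.2 ⟨map_nonneg _ hA'.nonneg, hA'.isUnit.map _⟩

end Matrix

section msqrt

variable {n : ℕ}

theorem msqrt_eq_cfcSqrt (M : Matrix (Fin n) (Fin n) ℂ) : msqrt M = CFC.sqrt M := by
  by_cases h : M.PosSemidef
  · rw [msqrt, dif_pos h, CFC.sqrt_eq_real_sqrt M h.nonneg, cfcₙ_eq_cfc, h.1.cfc_eq,
      IsHermitian.cfc, Unitary.conjStarAlgAut_apply]
    rfl
  · rw [msqrt, dif_neg h, CFC.sqrt, cfcₙ_apply_of_not_predicate]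
    rwa [nonneg_iff_posSemidef]

theorem msqrt_nonneg (M : Matrix (Fin n) (Fin n) ℂ) : 0 ≤ msqrt M := by
  rw [msqrt_eq_cfcSqrt]; exact CFC.sqrt_nonneg M

theorem isHermitian_msqrt (M : Matrix (Fin n) (Fin n) ℂ) : (msqrt M).IsHermitian :=
  (nonneg_iff_posSemidef.1 (msqrt_nonneg M)).1

theorem msqrt_mul_self {M : Matrix (Fin n) (Fin n) ℂ} (hM : 0 ≤ M) : msqrt M * msqrt M = M := by
  rw [msqrt_eq_cfcSqrt]; exact CFC.sqrt_mul_sqrt_self M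

theorem isUnit_msqrt {M : Matrix (Fin n) (Fin n) ℂ} (hM : M.PosDef) : IsUnit (msqrt M) := by
  rw [msqrt_eq_cfcSqrt]
  exact CFC.isUnit_sqrt_iff_isStrictlyPositive.2 (isStrictlyPositive_iff_posDef.2 hM)

end msqrt

theorem isBigO_msqrt_sq_add_smul_sub {n : ℕ} {A Z : Matrix (Fin n) (Fin n) ℂ} (hA : A.PosDef)
    (hZ : Z.IsHermitian) :
    (fun t : ℝ => msqrt (A ^ 2 + t • (A * Z + Z * A)) - (A + t • Z)) =O[𝓝 0] fun t => t ^ 2 := by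
  -- Matrices carry the entrywise sup norm here, so the C⋆-algebra estimates are made for the
  -- corresponding operators on `EuclideanSpace ℂ (Fin n)`.
  let e := toEuclideanCLM (n := Fin n) (𝕜 := ℂ)
  have hAe : IsStrictlyPositive (e A) := hA.isStrictlyPositive_toEuclideanCLM
  have hA2e : IsStrictlyPositive (e (A ^ 2)) := by
    rw [map_pow]
    exact IsStrictlyPositive.iff_of_unital.2 ⟨hAe.isSelfAdjoint.sq_nonneg, hAe.isUnit.pow 2⟩
  have hYe : IsSelfAdjoint (e (A * Z + Z * A)) := by
    refine IsSelfAdjoint.map ?_ e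
    rw [← isHermitian_iff_isSelfAdjoint, IsHermitian, conjTranspose_add, conjTranspose_mul,
      conjTranspose_mul, hA.1.eq, hZ.eq, add_comm]
  obtain ⟨c, hc, hS⟩ := hAe.eventually_algebraMap_le_add_smul (hZ.isSelfAdjoint.map e)
  obtain ⟨c', hc', hP⟩ := hA2e.eventually_algebraMap_le_add_smul hYe
  apply isBigO_of_isBigO_toEuclideanCLM
  refine .of_bound (‖e (Z * Z)‖ / c) ?_
  filter_upwards [hS, hP] with t hSt hPt
  have hPSD : 0 ≤ A ^ 2 + t • (A * Z + Z * A) := by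
    rw [← map_le_map_iff e, map_zero, map_add, toEuclideanCLM_real_smul]
    exact hPt.trans' (algebraMap_nonneg _ hc'.le)
  have hSt' : (c : ℂ) • 1 ≤ e (A + t • Z) := by
    rw [map_add, toEuclideanCLM_real_smul]
    refine hSt.trans_eq' ?_
    rw [Algebra.algebraMap_eq_smul_one]
    exact Complex.coe_smul c (1 : EuclideanSpace ℂ (Fin n) →L[ℂ] EuclideanSpace ℂ (Fin n))
  have hsq : (A + t • Z) * (A + t • Z) = A ^ 2 + t • (A * Z + Z * A) + t ^ 2 • (Z * Z) := by
    simp only [add_mul, mul_add, mul_smul_comm, smul_mul_assoc, smul_add, smul_smul, sq]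
    abel
  calc ‖e (msqrt (A ^ 2 + t • (A * Z + Z * A)) - (A + t • Z))‖
      ≤ ‖e (msqrt (A ^ 2 + t • (A * Z + Z * A))) * e (msqrt (A ^ 2 + t • (A * Z + Z * A)))
          - e (A + t • Z) * e (A + t • Z)‖ / c := by
        rw [map_sub]
        exact ContinuousLinearMap.norm_sub_le_norm_mul_self_sub_div hc
          (map_nonneg e (msqrt_nonneg _)) hSt'
    _ = ‖e (Z * Z)‖ / c * ‖t ^ 2‖ := by
        rw [← map_mul, ← map_mul, ← map_sub, msqrt_mul_self hPSD, hsq, sub_add_cancel_left,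
          map_neg, norm_neg, toEuclideanCLM_real_smul, norm_smul, div_mul_eq_mul_div, mul_comm]

theorem isBigO_sqAB_add_conjTranspose_sub {n : ℕ} {A X Z : Matrix (Fin n) (Fin n) ℂ}
    (hA : A.PosDef) (hZ : Z.IsHermitian) (hZeq : A * Z + Z * A = msqrt A * X * msqrt A) :
    (fun t : ℝ => (sqAB A (A + t • X) + (sqAB A (A + t • X))ᴴ - (2 : ℝ) • A) - t • X)
      =O[𝓝 0] fun t => t ^ 2 := by
  set R := msqrt A
  have hR : IsUnit R.det := (isUnit_iff_isUnit_det R).1 (isUnit_msqrt hA)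
  have hRR : R * R = A := msqrt_mul_self hA.posSemidef.nonneg
  let L : Matrix (Fin n) (Fin n) ℂ →ₗ[ℂ] Matrix (Fin n) (Fin n) ℂ :=
    LinearMap.mulLeftRight ℂ (R, R⁻¹) + LinearMap.mulLeftRight ℂ (R⁻¹, R)
  have hL (W : Matrix (Fin n) (Fin n) ℂ) : L W = R * W * R⁻¹ + R⁻¹ * W * R := rfl
  have hLA : L A = (2 : ℝ) • A := by
    simp only [hL, ← hRR, two_smul, Matrix.mul_assoc, nonsing_inv_mul_cancel_left R _ hR,
      mul_nonsing_inv R hR, Matrix.mul_one]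
  have hLZ : L Z = X := by
    have h := congrArg (fun W => R⁻¹ * W * R⁻¹) hZeq
    simp only [← hRR, Matrix.mul_add, Matrix.add_mul, Matrix.mul_assoc,
      nonsing_inv_mul_cancel_left R _ hR, mul_nonsing_inv R hR, Matrix.mul_one] at h
    rw [hL, ← h, Matrix.mul_assoc, Matrix.mul_assoc]
  have hLP (t : ℝ) : L (msqrt (A ^ 2 + t • (A * Z + Z * A))) =
      sqAB A (A + t • X) + (sqAB A (A + t • X))ᴴ := by
    have hconj : R * (A + t • X) * R = A ^ 2 + t • (A * Z + Z * A) := by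
      rw [hZeq, Matrix.mul_add, Matrix.add_mul, Matrix.mul_smul, Matrix.smul_mul, ← hRR, sq]
      noncomm_ring
    rw [hL, sqAB, hconj, conjTranspose_mul, conjTranspose_mul, conjTranspose_nonsing_inv,
      (isHermitian_msqrt A).eq, (isHermitian_msqrt _).eq, Matrix.mul_assoc R⁻¹]
  refine ((LinearMap.toContinuousLinearMap L).isBigO_comp _ _).trans
    (isBigO_msqrt_sq_add_smul_sub hA hZ) |>.congr_left fun t => ?_
  change L _ = _
  rw [map_sub, map_add, LinearMap.map_smul_of_tower, hLA, hLZ, hLP]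
  abel

theorem stmt12_general {n : ℕ} (A X Z : Matrix (Fin n) (Fin n) ℂ)
    (hA : A.PosDef) (hZ : Z.IsHermitian)
    (hZeq : A * Z + Z * A = msqrt A * X * msqrt A) :
    (fun t : ℝ => msqrt (A ^ 2 + t • (msqrt A * X * msqrt A)) - (A + t • Z))
        =O[nhds (0 : ℝ)] (fun t : ℝ => t ^ 2) ∧
    (fun t : ℝ => (sqAB A (A + t • X) + (sqAB A (A + t • X))ᴴ - (2 : ℝ) • A) - t • X)
        =O[nhds (0 : ℝ)] (fun t : ℝ => t ^ 2) ∧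
    HasDerivAt
      (fun t : ℝ => sqAB A (A + t • X) + (sqAB A (A + t • X))ᴴ - (2 : ℝ) • A) X 0 := by
  have hlog := isBigO_sqAB_add_conjTranspose_sub hA hZ hZeq
  refine ⟨?_, hlog, hasDerivAt_of_isBigO_sq hlog⟩
  rw [← hZeq]
  exact isBigO_msqrt_sq_add_smul_sub hA hZ

theorem stmt12 {n : ℕ} (A X Z : Matrix (Fin n) (Fin n) ℂ)
    (hA : A.PosDef) (hX : X.IsHermitian) (hZ : Z.IsHermitian)
    (hZeq : A * Z + Z * A = msqrt A * X * msqrt A) :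
    (fun t : ℝ => msqrt (A ^ 2 + t • (msqrt A * X * msqrt A)) - (A + t • Z))
        =O[nhds (0 : ℝ)] (fun t : ℝ => t ^ 2) ∧
    (fun t : ℝ => (sqAB A (A + t • X) + (sqAB A (A + t • X))ᴴ - (2 : ℝ) • A) - t • X)
        =O[nhds (0 : ℝ)] (fun t : ℝ => t ^ 2) ∧
    HasDerivAt
      (fun t : ℝ => sqAB A (A + t • X) + (sqAB A (A + t • X))ᴴ - (2 : ℝ) • A) X 0 :=
  stmt12_general A X Z hA hZ hZeq
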